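/- arXiv:2410.10668 — 2 statements merged into one kernel-verified Lean document; each statement's English description precedes it below -/
import Mathlib

section
/- Let f : 𝕋 → ℝ be continuous on the circle 𝕋 = ℝ/ℤ with 0 ≤ f ≤ 1, and let φ ∈ Φ. Suppose that for almost every y ∈ [0,1) the superlevel set E_y = {x : f(x) > y} has finitely many component arcs, N(E_y) of them, and that ∫_0^1 |E_y| φ(|E_y|/N(E_y)) dy < ∞ (the integrand interpreted as 0 when E_y is empty). Then there exists a constant C > 0 such that ω(f,t)_1 ≤ C/φ(t) for all t ∈ (0,1]. -/
open MeasureTheory Set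

/-- The `L^p` modulus of continuity `ω(f,t)_p` on the circle `𝕋 = ℝ/ℤ`. -/
noncomputable def modulus (f : AddCircle (1:ℝ) → ℝ) (p t : ℝ) : ℝ :=
  ⨆ h : {h : ℝ // |h| ≤ t},
    (∫ x : AddCircle (1:ℝ), |f (x + ((h.1 : ℝ) : AddCircle (1:ℝ))) - f x| ^ p) ^ (1/p)

/-- `τ(h,E)`: the measure of the set where the characteristic function of `E`
translated by `h` differs from itself. -/
noncomputable def tau (h : ℝ) (E : Set (AddCircle (1:ℝ))) : ℝ :=
  (volume {x : AddCircle (1:ℝ) |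
    E.indicator (fun _ => (1:ℝ)) (x + ((h : ℝ) : AddCircle (1:ℝ)))
      ≠ E.indicator (fun _ => (1:ℝ)) x}).toReal

/-- The open arc of the circle which is the image of the interval `(a, a+l)`. -/
noncomputable def arc (a l : ℝ) : Set (AddCircle (1:ℝ)) :=
  (fun r : ℝ => (r : AddCircle (1:ℝ))) '' Set.Ioo a (a + l)

/-- The class `Φ`: `φ` is positive and non-increasing on `(0,1]`, and `t ↦ t·φ(t)` is
non-decreasing, concave and bounded on some interval `(0,1/c)` with `c > 1`. -/
def IsPhiClass (φ : ℝ → ℝ) : Prop :=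
  (∀ t ∈ Set.Ioc (0:ℝ) 1, 0 < φ t) ∧
  AntitoneOn φ (Set.Ioc 0 1) ∧
  ∃ c > (1:ℝ), MonotoneOn (fun t => t * φ t) (Set.Ioo 0 (1/c)) ∧
    ConcaveOn ℝ (Set.Ioo 0 (1/c)) (fun t => t * φ t) ∧
    BddAbove ((fun t => t * φ t) '' Set.Ioo 0 (1/c))

/-! By the layer-cake formula, `∫ |f(x+h) - f(x)| dx = ∫₀¹ |(E_y - h) ∆ E_y| dy`. An arc
of length `ℓ` moves by at most `2 min(|h|, ℓ)` under translation by `h`, so if `E_y` consists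
of `n` disjoint arcs of total length `e`, then
`|(E_y - h) ∆ E_y| ≤ 2 min(n|h|, e) = 2n min(|h|, e/n)`.
For `|h| ≤ t < 1/c`, the monotonicity of `φ` and of `t ↦ t φ(t)`, together with the
boundedness of `t φ(t)`, give `min(t, s) φ(t) ≤ K s φ(s)` for all `s ∈ (0, 1]` and some
constant `K`; taking `s = e/n` bounds the integrand by `2K |E_y| φ(|E_y|/N(E_y)) / φ(t)`.
For `t ≥ 1/c` the trivial bound `ω(f,t)_1 ≤ 1` suffices. -/

open scoped ENNReal symmDiff

lemma AddCircle.volume_coe_image_of_subset_Ioc {T : ℝ} [Fact (0 < T)] {S : Set ℝ} {u : ℝ}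
    (hS : MeasurableSet S) (hSu : S ⊆ Ioc u (u + T)) :
    volume (((↑) : ℝ → AddCircle T) '' S) = volume S := by
  have hpre : ((↑) : ℝ → AddCircle T) '' S = equivIoc T u ⁻¹' (Subtype.val ⁻¹' S) := by
    ext x
    constructor
    · rintro ⟨r, hr, rfl⟩
      simpa [mem_preimage, equivIoc_coe_eq (hSu hr)] using hr
    · exact fun hx => ⟨_, hx, coe_equivIoc⟩
  rw [hpre, (measurePreserving_equivIoc T).measure_preimage
      (measurable_subtype_coe hS).nullMeasurableSet,
    (MeasurableEmbedding.subtype_coe measurableSet_Ioc).comap_apply,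
    Subtype.image_preimage_coe, inter_eq_right.mpr hSu]

lemma Real.volume_Ioo_diff_Ioo_le (u v l : ℝ) :
    volume (Ioo u (u + l) \ Ioo v (v + l)) ≤ ENNReal.ofReal (min |u - v| l) := by
  rw [ENNReal.ofReal_min]
  refine le_min ?_ ?_
  · rcases le_total u v with huv | hvu
    · calc volume (Ioo u (u + l) \ Ioo v (v + l))
          ≤ volume (Ioc u v) := measure_mono fun x ⟨⟨hux, hxu⟩, hxv⟩ =>
            ⟨hux, not_lt.1 fun hvx => hxv ⟨hvx, by linarith⟩⟩
        _ = ENNReal.ofReal |u - v| := by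
          rw [Real.volume_Ioc, abs_sub_comm, abs_of_nonneg (by linarith)]
    · calc volume (Ioo u (u + l) \ Ioo v (v + l))
          ≤ volume (Ico (v + l) (u + l)) := measure_mono fun x ⟨⟨hux, hxu⟩, hxv⟩ =>
            ⟨not_lt.1 fun hxv' => hxv ⟨by linarith, hxv'⟩, hxu⟩
        _ = ENNReal.ofReal |u - v| := by
          rw [Real.volume_Ico, abs_of_nonneg (by linarith)]
          ring_nf
  · calc volume (Ioo u (u + l) \ Ioo v (v + l)) ≤ volume (Ioo u (u + l)) :=
          measure_mono sdiff_subset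
      _ = ENNReal.ofReal l := by rw [Real.volume_Ioo, add_sub_cancel_left]

local notation "𝕋" => AddCircle (1:ℝ)

instance : IsProbabilityMeasure (volume : Measure 𝕋) := ⟨by simp⟩

lemma Ioo_subset_Ioc_add_one {a l : ℝ} (hl : l ≤ 1) : Ioo a (a + l) ⊆ Ioc a (a + 1) :=
  Ioo_subset_Ioc_self.trans (Ioc_subset_Ioc_right (by linarith))

lemma isOpen_arc (a l : ℝ) : IsOpen (arc a l) :=
  QuotientAddGroup.isOpenMap_coe _ isOpen_Ioo

lemma volume_arc {a l : ℝ} (hl : l ≤ 1) : volume (arc a l) = ENNReal.ofReal l := by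
  rw [arc, AddCircle.volume_coe_image_of_subset_Ioc measurableSet_Ioo (Ioo_subset_Ioc_add_one hl),
    Real.volume_Ioo, add_sub_cancel_left]

lemma volume_arc_diff_arc_le {u v l : ℝ} (hl : l ≤ 1) :
    volume (arc u l \ arc v l) ≤ ENNReal.ofReal (min |u - v| l) :=
  calc volume (arc u l \ arc v l)
      ≤ volume (((↑) : ℝ → 𝕋) '' (Ioo u (u + l) \ Ioo v (v + l))) := by
        refine measure_mono ?_
        rw [arc, arc, sdiff_subset_iff, ← image_union, union_sdiff_self]
        exact image_mono subset_union_right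
    _ = volume (Ioo u (u + l) \ Ioo v (v + l)) :=
        AddCircle.volume_coe_image_of_subset_Ioc (measurableSet_Ioo.diff measurableSet_Ioo)
          (sdiff_subset.trans (Ioo_subset_Ioc_add_one hl))
    _ ≤ ENNReal.ofReal (min |u - v| l) := Real.volume_Ioo_diff_Ioo_le u v l

lemma preimage_add_arc (h a l : ℝ) : (fun x : 𝕋 => x + h) ⁻¹' arc a l = arc (a - h) l := by
  ext x
  constructor
  · rintro ⟨r, hr, hrx⟩
    refine ⟨r - h, ⟨by linarith [hr.1], by linarith [hr.2]⟩, ?_⟩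
    simp only [AddCircle.coe_sub, hrx, add_sub_cancel_right]
  · rintro ⟨r, hr, rfl⟩
    exact ⟨r + h, ⟨by linarith [hr.1], by linarith [hr.2]⟩, by simp⟩

lemma volume_preimage_add_arc_symmDiff_le (h a : ℝ) {l : ℝ} (hl0 : 0 ≤ l) (hl : l ≤ 1) :
    volume (((fun x : 𝕋 => x + h) ⁻¹' arc a l) ∆ arc a l) ≤
      ENNReal.ofReal (2 * min |h| l) := by
  have hmin : 0 ≤ min |h| l := le_min (abs_nonneg h) hl0
  rw [preimage_add_arc, Set.symmDiff_def, two_mul, ENNReal.ofReal_add hmin hmin]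
  refine (measure_union_le _ _).trans (add_le_add ?_ ?_)
  · simpa [abs_neg] using volume_arc_diff_arc_le (u := a - h) (v := a) hl
  · simpa using volume_arc_diff_arc_le (u := a) (v := a - h) hl

lemma volume_preimage_add_symmDiff_biUnion_arc_le (h : ℝ) (s : Finset ℕ) {a l : ℕ → ℝ}
    (hl : ∀ k ∈ s, l k ∈ Icc 0 1) :
    volume (((fun x : 𝕋 => x + h) ⁻¹' ⋃ k ∈ s, arc (a k) (l k)) ∆
        ⋃ k ∈ s, arc (a k) (l k)) ≤ ENNReal.ofReal (2 * ∑ k ∈ s, min |h| (l k)) := by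
  rw [preimage_iUnion₂, Finset.mul_sum,
    ENNReal.ofReal_sum_of_nonneg fun k hk => by have := (hl k hk).1; positivity]
  calc _ ≤ volume (⋃ k ∈ s,
          ((fun x : 𝕋 => x + h) ⁻¹' arc (a k) (l k)) ∆ arc (a k) (l k)) :=
        measure_mono <| iUnion_symmDiff_iUnion_subset.trans <|
          iUnion_mono fun _ => iUnion_symmDiff_iUnion_subset
    _ ≤ ∑ k ∈ s,
          volume (((fun x : 𝕋 => x + h) ⁻¹' arc (a k) (l k)) ∆ arc (a k) (l k)) :=
        measure_biUnion_finset_le _ _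
    _ ≤ _ := Finset.sum_le_sum fun k hk =>
        volume_preimage_add_arc_symmDiff_le h (a k) (hl k hk).1 (hl k hk).2

lemma volume_biUnion_arc (s : Finset ℕ) {a l : ℕ → ℝ}
    (hdisj : (s : Set ℕ).PairwiseDisjoint fun k => arc (a k) (l k))
    (hl : ∀ k ∈ s, l k ∈ Icc 0 1) :
    volume (⋃ k ∈ s, arc (a k) (l k)) = ENNReal.ofReal (∑ k ∈ s, l k) := by
  rw [measure_biUnion_finset hdisj fun k _ => (isOpen_arc _ _).measurableSet,
    ENNReal.ofReal_sum_of_nonneg fun k hk => (hl k hk).1]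
  exact Finset.sum_congr rfl fun k hk => volume_arc (hl k hk).2

lemma Finset.sum_min_le_min_card_mul {ι : Type*} (s : Finset ι) (x : ℝ) (l : ι → ℝ) :
    ∑ k ∈ s, min x (l k) ≤ min (s.card * x) (∑ k ∈ s, l k) := by
  refine le_min ?_ (Finset.sum_le_sum fun k _ => min_le_right _ _)
  simpa using Finset.sum_le_sum fun k (_ : k ∈ s) => min_le_left x (l k)

lemma tau_eq_measureReal_symmDiff (h : ℝ) (E : Set 𝕋) :
    tau h E = volume.real (((fun x : 𝕋 => x + h) ⁻¹' E) ∆ E) := by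
  rw [tau, measureReal_def]
  congr 2
  ext x
  by_cases hxh : x + h ∈ E <;> by_cases hx : x ∈ E <;> simp [hxh, hx, mem_symmDiff]

lemma IsPhiClass.exists_min_mul_le {φ : ℝ → ℝ} (hφ : IsPhiClass φ) :
    ∃ c > (1:ℝ), ∃ K > (0:ℝ), ∀ t ∈ Ioo 0 (1/c), ∀ s ∈ Ioc 0 1,
      min t s * φ t ≤ K * (s * φ s) := by
  obtain ⟨hpos, hanti, c, hc, hmono, -, M, hM⟩ := hφ
  have hc0 : 0 < c := by linarith
  have hc1 : 1/c < 1 := (div_lt_one hc0).2 hc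
  have hφ1 : 0 < φ 1 := hpos 1 ⟨one_pos, le_rfl⟩
  refine ⟨c, hc, max 1 (c * M / φ 1), lt_max_of_lt_left one_pos, fun t ht s hs => ?_⟩
  have htI : t ∈ Ioc 0 1 := ⟨ht.1, by linarith [ht.2]⟩
  have hφt : 0 < φ t := hpos t htI
  have hsφ : 0 ≤ s * φ s := mul_nonneg hs.1.le (hpos s hs).le
  have hmin : min t s * φ t ≤ t * φ t := mul_le_mul_of_nonneg_right (min_le_left _ _) hφt.le
  rcases le_total s t with hst | hts
  · calc min t s * φ t ≤ s * φ s :=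
          mul_le_mul (min_le_right _ _) (hanti hs htI hst) hφt.le hs.1.le
      _ ≤ _ := le_mul_of_one_le_left hsφ (le_max_left _ _)
  rcases lt_or_ge s (1/c) with hsc | hsc
  · calc min t s * φ t ≤ t * φ t := hmin
      _ ≤ s * φ s := hmono ht ⟨hs.1, hsc⟩ hts
      _ ≤ _ := le_mul_of_one_le_left hsφ (le_max_left _ _)
  -- beyond `1/c`, `t φ(t) ≤ M` is compared with `s φ(s) ≥ φ(1)/c`
  have hM0 : 0 ≤ M := (mul_pos ht.1 hφt).le.trans (hM ⟨t, ht, rfl⟩)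
  calc min t s * φ t ≤ t * φ t := hmin
    _ ≤ M := hM ⟨t, ht, rfl⟩
    _ = c * M / φ 1 * (1/c * φ 1) := by field_simp
    _ ≤ c * M / φ 1 * (s * φ s) := mul_le_mul_of_nonneg_left
        (mul_le_mul hsc (hanti hs ⟨one_pos, le_rfl⟩ hs.2) hφ1.le hs.1.le) (by positivity)
    _ ≤ _ := by gcongr; exact le_max_right _ _

lemma tau_mul_le {φ : ℝ → ℝ} {c K t h : ℝ}
    (hK : ∀ t ∈ Ioo 0 (1/c), ∀ s ∈ Ioc 0 1, min t s * φ t ≤ K * (s * φ s))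
    (ht : t ∈ Ioo 0 (1/c)) (hφt : 0 ≤ φ t) (hh : |h| ≤ t)
    {E : Set 𝕋} {n : ℕ} (hn : n ≠ 0) {a l : ℕ → ℝ}
    (hE : E = ⋃ k ∈ Finset.range n, arc (a k) (l k))
    (hdisj : (Finset.range n : Set ℕ).PairwiseDisjoint fun k => arc (a k) (l k))
    (hl : ∀ k ∈ Finset.range n, l k ∈ Ioc 0 1) :
    tau h E * φ t ≤ 2 * K * (volume.real E * φ (volume.real E / n)) := by
  have hl' : ∀ k ∈ Finset.range n, l k ∈ Icc 0 1 := fun k hk => Ioc_subset_Icc_self (hl k hk)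
  set e := ∑ k ∈ Finset.range n, l k
  have hn0 : (0:ℝ) < n := by positivity
  have he0 : 0 < e := Finset.sum_pos (fun k hk => (hl k hk).1) (by simpa using hn)
  have hvolE : volume.real E = e := by
    rw [measureReal_def, hE, volume_biUnion_arc _ hdisj hl', ENNReal.toReal_ofReal he0.le]
  have he1 : e ≤ 1 := hvolE ▸ measureReal_le_one
  have hs : e / n ∈ Ioc 0 1 := ⟨div_pos he0 hn0,
    (div_le_one hn0).2 (he1.trans (by exact_mod_cast Nat.one_le_iff_ne_zero.2 hn))⟩
  have hD : tau h E ≤ 2 * (n * min t (e / n)) := by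
    rw [tau_eq_measureReal_symmDiff]
    refine ENNReal.toReal_le_of_le_ofReal
      (mul_nonneg zero_le_two (mul_nonneg hn0.le (le_min ht.1.le hs.1.le))) ?_
    refine hE ▸ (volume_preimage_add_symmDiff_biUnion_arc_le h _ hl').trans
      (ENNReal.ofReal_le_ofReal ?_)
    rw [mul_min_of_nonneg _ _ hn0.le, mul_div_cancel₀ _ hn0.ne']
    gcongr
    refine (Finset.sum_min_le_min_card_mul _ _ _).trans ?_
    simp only [Finset.card_range]
    gcongr
  calc tau h E * φ t
      ≤ 2 * n * (min t (e / n) * φ t) := by nlinarith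
    _ ≤ 2 * n * (K * (e / n * φ (e / n))) :=
        mul_le_mul_of_nonneg_left (hK t ht _ hs) (by positivity)
    _ = 2 * K * (volume.real E * φ (volume.real E / n)) := by
        rw [hvolE]
        field_simp

lemma Real.volume_restrict_Ioo_Iio_symmDiff_Iio {A B : ℝ} (hA : A ∈ Icc (0:ℝ) 1)
    (hB : B ∈ Icc (0:ℝ) 1) :
    volume.restrict (Ioo 0 1) (Iio A ∆ Iio B) = ENNReal.ofReal |A - B| := by
  have hAB : Iio A ∆ Iio B = Ico (min A B) (max A B) := by
    ext y
    simp only [mem_symmDiff, mem_Iio, mem_Ico, min_le_iff, lt_max_iff]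
    constructor <;> intro hy <;> rcases le_total A B with h | h <;> grind
  rw [Measure.restrict_congr_set Ioo_ae_eq_Icc, hAB, Measure.restrict_apply measurableSet_Ico,
    inter_eq_left.2 (Ico_subset_Icc_self.trans (Icc_subset_Icc (le_min hA.1 hB.1)
      (max_le hA.2 hB.2))), Real.volume_Ico, max_sub_min_eq_abs']

theorem lintegral_ofReal_abs_sub_eq_lintegral_symmDiff {X : Type*} [MeasurableSpace X]
    (μ : Measure X) [SFinite μ] {f g : X → ℝ} (hf : Measurable f) (hg : Measurable g)
    (hf01 : ∀ x, f x ∈ Icc (0:ℝ) 1) (hg01 : ∀ x, g x ∈ Icc (0:ℝ) 1) :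
    ∫⁻ x, ENNReal.ofReal |g x - f x| ∂μ =
      ∫⁻ y in Ioo 0 1, μ ({x | y < g x} ∆ {x | y < f x}) := by
  set S : Set (X × ℝ) := {p | p.2 < g p.1} ∆ {p | p.2 < f p.1}
  have hS : MeasurableSet S :=
    (measurableSet_lt measurable_snd (hg.comp measurable_fst)).symmDiff
      (measurableSet_lt measurable_snd (hf.comp measurable_fst))
  calc ∫⁻ x, ENNReal.ofReal |g x - f x| ∂μ
      = ∫⁻ x, volume.restrict (Ioo 0 1) (Prod.mk x ⁻¹' S) ∂μ :=
        lintegral_congr fun x => (Real.volume_restrict_Ioo_Iio_symmDiff_Iio (hg01 x) (hf01 x)).symm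
    _ = μ.prod (volume.restrict (Ioo 0 1)) S := (Measure.prod_apply hS).symm
    _ = ∫⁻ y in Ioo 0 1, μ ({x | y < g x} ∆ {x | y < f x}) := Measure.prod_apply_symm hS

theorem integral_abs_sub_le_one {X : Type*} [MeasurableSpace X] {μ : Measure X}
    [IsProbabilityMeasure μ] {f g : X → ℝ} (hf01 : ∀ x, f x ∈ Icc (0:ℝ) 1)
    (hg01 : ∀ x, g x ∈ Icc (0:ℝ) 1) :
    ∫ x, |g x - f x| ∂μ ≤ 1 :=
  calc ∫ x, |g x - f x| ∂μ ≤ ‖∫ x, |g x - f x| ∂μ‖ := Real.le_norm_self _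
    _ ≤ 1 * μ.real univ := norm_integral_le_of_norm_le_const <| ae_of_all _ fun x => by
        obtain ⟨⟨hf0, hf1⟩, hg0, hg1⟩ := And.intro (hf01 x) (hg01 x)
        rw [Real.norm_eq_abs, abs_abs, abs_sub_le_iff]
        constructor <;> linarith
    _ = 1 := by simp

/-- The integrand `|E_y| φ(|E_y| / N(E_y))` of the level-set hypothesis, `E_y = {f > y}`. -/
noncomputable def levelSetWeight (f : 𝕋 → ℝ) (φ : ℝ → ℝ) (N : ℝ → ℕ) (y : ℝ) :
    ℝ≥0∞ :=
  if N y = 0 then 0 else ENNReal.ofReal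
    ((volume {x | f x > y}).toReal * φ ((volume {x | f x > y}).toReal / (N y : ℝ)))

lemma integral_abs_add_sub_le {f : 𝕋 → ℝ} (hf : Continuous f)
    (hf01 : ∀ x, f x ∈ Icc (0:ℝ) 1) {φ : ℝ → ℝ} {c K t : ℝ} (hK0 : 0 ≤ K)
    (hK : ∀ t ∈ Ioo 0 (1/c), ∀ s ∈ Ioc 0 1, min t s * φ t ≤ K * (s * φ s))
    (ht : t ∈ Ioo 0 (1/c)) (hφt : 0 < φ t) {N : ℝ → ℕ} {a l : ℝ → ℕ → ℝ}
    (hdecomp : ∀ᵐ y ∂(volume.restrict (Ioo (0:ℝ) 1)),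
      {x | f x > y} = ⋃ k ∈ Finset.range (N y), arc (a y k) (l y k) ∧
      (Finset.range (N y) : Set ℕ).PairwiseDisjoint (fun k => arc (a y k) (l y k)) ∧
      ∀ k ∈ Finset.range (N y), l y k ∈ Ioc (0:ℝ) 1)
    (hint : ∫⁻ y in Ioo 0 1, levelSetWeight f φ N y ≠ ⊤) {h : ℝ} (hh : |h| ≤ t) :
    ∫ x, |f (x + h) - f x| ≤
      2 * K * (∫⁻ y in Ioo 0 1, levelSetWeight f φ N y).toReal / φ t := by
  have hlevel : ∀ᵐ y ∂(volume.restrict (Ioo (0:ℝ) 1)),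
      volume (((fun x : 𝕋 => x + h) ⁻¹' {x | f x > y}) ∆ {x | f x > y}) ≤
        ENNReal.ofReal (2 * K / φ t) * levelSetWeight f φ N y := by
    filter_upwards [hdecomp] with y ⟨hE, hdisj, hl⟩
    rcases eq_or_ne (N y) 0 with hN | hN
    · simp [hE, hN]
    · rw [levelSetWeight, if_neg hN, ← ENNReal.ofReal_mul (by positivity),
        ← ENNReal.ofReal_toReal (measure_ne_top _ _), ← measureReal_def,
        ← tau_eq_measureReal_symmDiff]
      refine ENNReal.ofReal_le_ofReal ?_
      rw [div_mul_eq_mul_div, le_div_iff₀ hφt]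
      exact tau_mul_le hK ht hφt.le hh hN hE hdisj hl
  have hcont : Continuous fun x : 𝕋 => f (x + h) := hf.comp (continuous_add_const _)
  calc ∫ x, |f (x + h) - f x|
      = (∫⁻ x, ENNReal.ofReal |f (x + h) - f x|).toReal := by
        rw [integral_eq_lintegral_of_nonneg_ae (ae_of_all _ fun x => abs_nonneg _)
          (by fun_prop)]
    _ = (∫⁻ y in Ioo 0 1,
          volume (((fun x : 𝕋 => x + h) ⁻¹' {x | f x > y}) ∆ {x | f x > y})).toReal := by
        rw [lintegral_ofReal_abs_sub_eq_lintegral_symmDiff _ hf.measurable hcont.measurable hf01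
          fun x => hf01 _]
        rfl
    _ ≤ (∫⁻ y in Ioo 0 1, ENNReal.ofReal (2 * K / φ t) * levelSetWeight f φ N y).toReal :=
        ENNReal.toReal_mono (by
          rw [lintegral_const_mul' _ _ ENNReal.ofReal_ne_top]
          exact ENNReal.mul_ne_top ENNReal.ofReal_ne_top hint) (lintegral_mono_ae hlevel)
    _ = 2 * K * (∫⁻ y in Ioo 0 1, levelSetWeight f φ N y).toReal / φ t := by
        rw [lintegral_const_mul' _ _ ENNReal.ofReal_ne_top, ENNReal.toReal_mul,
          ENNReal.toReal_ofReal (by positivity), div_mul_eq_mul_div, mul_div_right_comm]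

lemma modulus_one (f : 𝕋 → ℝ) (t : ℝ) :
    modulus f 1 t = ⨆ h : {h : ℝ // |h| ≤ t}, ∫ x, |f (x + (h.1 : 𝕋)) - f x| := by
  simp [modulus]

/-- If `f` is continuous on the circle with `0 ≤ f ≤ 1`, `φ ∈ Φ`, for a.e.
`y ∈ [0,1)` the superlevel set `E_y` is a union of `N y` disjoint open arcs, and
`∫₀¹ |E_y| φ(|E_y|/N(E_y)) dy < ∞` (integrand `0` when `E_y = ∅`), then
`ω(f,t)_1 ≤ C/φ(t)` on `(0,1]` for some `C > 0`. -/
theorem stmt_1 (f : AddCircle (1:ℝ) → ℝ) (hf : Continuous f)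
    (hf0 : ∀ x, 0 ≤ f x) (hf1 : ∀ x, f x ≤ 1)
    (φ : ℝ → ℝ) (hφ : IsPhiClass φ)
    (N : ℝ → ℕ) (a l : ℝ → ℕ → ℝ)
    (hdecomp : ∀ᵐ y ∂(volume.restrict (Set.Ico (0:ℝ) 1)),
      ({x : AddCircle (1:ℝ) | f x > y} = ⋃ k ∈ Finset.range (N y), arc (a y k) (l y k)) ∧
      ((Finset.range (N y) : Set ℕ).PairwiseDisjoint (fun k => arc (a y k) (l y k))) ∧
      (∀ k ∈ Finset.range (N y), l y k ∈ Set.Ioc (0:ℝ) 1))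
    (hint : ∫⁻ y in Set.Ioo (0:ℝ) 1,
      (if N y = 0 then 0 else ENNReal.ofReal
        ((volume {x : AddCircle (1:ℝ) | f x > y}).toReal *
          φ ((volume {x : AddCircle (1:ℝ) | f x > y}).toReal / (N y : ℝ)))) < ⊤) :
    ∃ C > 0, ∀ t ∈ Set.Ioc (0:ℝ) 1, modulus f 1 t ≤ C / φ t := by
  obtain ⟨c, hc, K, hK0, hK⟩ := hφ.exists_min_mul_le
  have hc' : 1/c ∈ Ioc (0:ℝ) 1 := ⟨by positivity, (div_le_one (by positivity)).2 hc.le⟩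
  set I := (∫⁻ y in Ioo 0 1, levelSetWeight f φ N y).toReal
  refine ⟨max (φ (1/c)) (2 * K * I), lt_max_of_lt_left (hφ.1 _ hc'), fun t ht => ?_⟩
  have hφt : 0 < φ t := hφ.1 t ht
  have : Nonempty {h : ℝ // |h| ≤ t} := ⟨⟨0, by simpa using ht.1.le⟩⟩
  rw [modulus_one]
  refine ciSup_le fun ⟨h, hh⟩ => ?_
  rcases lt_or_ge t (1/c) with htc | htc
  · calc ∫ x, |f (x + h) - f x| ≤ 2 * K * I / φ t :=
          integral_abs_add_sub_le hf (fun x => ⟨hf0 x, hf1 x⟩) hK0.le hK ⟨ht.1, htc⟩ hφt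
            (ae_restrict_of_ae_restrict_of_subset Ioo_subset_Ico_self hdecomp) hint.ne hh
      _ ≤ _ := by gcongr; exact le_max_right _ _
  · calc ∫ x, |f (x + h) - f x| ≤ 1 :=
          integral_abs_sub_le_one (fun x => ⟨hf0 x, hf1 x⟩) fun x => ⟨hf0 _, hf1 _⟩
      _ ≤ φ (1/c) / φ t := (one_le_div hφt).2 (hφ.2.1 hc' ht htc)
      _ ≤ _ := by gcongr; exact le_max_left _ _
end

section
/- Let f : 𝕋 → ℝ be continuous on the circle 𝕋 = ℝ/ℤ with 0 ≤ f ≤ 1, and let n(y) denote the number (possibly infinite) of solutions x ∈ 𝕋 of f(x) = y. If ∫_0^1 (log(n(y)))^{1/2} dy < ∞ (the integrand interpreted as 0 when n(y) ≤ 1 and +∞ when n(y) = ∞), then ω(f,t)_1 = O((log(1/t))^{-1/2}) as t → 0+, i.e. there exist C > 0 and t₀ ∈ (0,1) such that ω(f,t)_1 ≤ C·(log(1/t))^{-1/2} for all t ∈ (0,t₀]. -/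
/-!
Fubini in the level variable gives `∫ |f(x+h) - f x| dx = ∫₀¹ |E_y| dy`, where `E_y` is the set of
`x` at which the level `y` separates `f x` from `f (x+h)`. By the intermediate value theorem
every point of `E_y` lies within `|h| ≤ t` of a solution of `f = y`, so `|E_y| ≤ 2 t n(y)`; also
`|E_y| ≤ 1`. Levels with `n(y) < t^{-1/2}` thus contribute at most `2 √t`, while for the others
`1 ≤ (log n(y) / (½ log t⁻¹))^{1/2}`, so `ω(f,t)_1 ≤ √2 ‖(log n)^{1/2}‖₁ (log t⁻¹)^{-1/2} + 2 √t`,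
and `t log t⁻¹ < 1` absorbs the last term.
-/

open MeasureTheory Set Classical

open scoped ENNReal
open Real

/-- `(log n(y))^{1/2}` for the Banach indicatrix `n(y)` of `f`, with value `∞` when `n(y) = ∞`;
it vanishes for `n(y) ≤ 1` since `Real.log 0 = Real.log 1 = 0`. -/
noncomputable def sqrtLogIndicatrix {X : Type*} (f : X → ℝ) (y : ℝ) : ℝ≥0∞ :=
  if {x | f x = y}.Infinite then ⊤ else ENNReal.ofReal √(log {x | f x = y}.ncard)

lemma setOf_lt_ne_lt_eq_Ico (a b : ℝ) :
    {y : ℝ | (y < a) ≠ (y < b)} = Ico (min a b) (max a b) := by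
  ext y
  simp only [mem_ofPred_eq, mem_Ico, min_le_iff, lt_max_iff, ne_eq, eq_iff_iff]
  grind

lemma volume_restrict_Ioo_setOf_lt_ne_lt {a b : ℝ} (ha : a ∈ Icc (0:ℝ) 1)
    (hb : b ∈ Icc (0:ℝ) 1) :
    volume.restrict (Ioo (0:ℝ) 1) {y : ℝ | (y < a) ≠ (y < b)} = ENNReal.ofReal |a - b| := by
  rw [Measure.restrict_congr_set Ioo_ae_eq_Icc, setOf_lt_ne_lt_eq_Ico,
    Measure.restrict_apply' measurableSet_Icc, inter_eq_left.2, Real.volume_Ico,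
    max_sub_min_eq_abs']
  exact Ico_subset_Icc_self.trans (Icc_subset_Icc (le_min ha.1 hb.1) (max_le ha.2 hb.2))

theorem lintegral_ofReal_abs_sub_eq_setLIntegral {X : Type*} [MeasurableSpace X]
    {μ : Measure X} [SFinite μ] {g₁ g₂ : X → ℝ} (hg₁ : Measurable g₁) (hg₂ : Measurable g₂)
    (h₁ : ∀ x, g₁ x ∈ Icc (0:ℝ) 1) (h₂ : ∀ x, g₂ x ∈ Icc (0:ℝ) 1) :
    ∫⁻ x, ENNReal.ofReal |g₁ x - g₂ x| ∂μ
      = ∫⁻ y in Ioo (0:ℝ) 1, μ {x | (y < g₁ x) ≠ (y < g₂ x)} := by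
  have hA : MeasurableSet {p : X × ℝ | (p.2 < g₁ p.1) ≠ (p.2 < g₂ p.1)} := by measurability
  calc ∫⁻ x, ENNReal.ofReal |g₁ x - g₂ x| ∂μ
      = ∫⁻ x, volume.restrict (Ioo (0:ℝ) 1) {y | (y < g₁ x) ≠ (y < g₂ x)} ∂μ :=
        lintegral_congr fun x => (volume_restrict_Ioo_setOf_lt_ne_lt (h₁ x) (h₂ x)).symm
    _ = μ.prod (volume.restrict (Ioo (0:ℝ) 1)) {p | (p.2 < g₁ p.1) ≠ (p.2 < g₂ p.1)} :=
        (Measure.prod_apply hA).symm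
    _ = _ := Measure.prod_apply_symm hA

lemma AddCircle.exists_eq_dist_le_of_lt_ne_lt {T : ℝ} {f : AddCircle T → ℝ} (hf : Continuous f)
    {x : AddCircle T} {y h : ℝ} (hx : (y < f (x + h)) ≠ (y < f x)) :
    ∃ z, f z = y ∧ dist x z ≤ |h| := by
  have hy : y ∈ uIcc (f (x + (0:ℝ))) (f (x + h)) := by
    have hmem : y ∈ {y : ℝ | (y < f (x + h)) ≠ (y < f x)} := hx
    rw [setOf_lt_ne_lt_eq_Ico] at hmem
    rw [AddCircle.coe_zero, add_zero, uIcc_comm]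
    exact Ico_subset_Icc_self hmem
  obtain ⟨s, hs, rfl⟩ := intermediate_value_uIcc
    (f := fun s : ℝ => f (x + s)) (by fun_prop : Continuous _).continuousOn hy
  refine ⟨x + s, rfl, ?_⟩
  rw [dist_self_add_right]
  exact QuotientAddGroup.norm_mk_le_norm.trans (by simpa using abs_sub_left_of_mem_uIcc hs)

lemma AddCircle.volume_setOf_lt_ne_lt_le {T : ℝ} [Fact (0 < T)] {f : AddCircle T → ℝ}
    (hf : Continuous f) {y h t : ℝ} (hh : |h| ≤ t) (hfin : {x | f x = y}.Finite) :
    volume {x : AddCircle T | (y < f (x + h)) ≠ (y < f x)}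
      ≤ {x | f x = y}.ncard * ENNReal.ofReal (2 * t) := by
  calc volume {x : AddCircle T | (y < f (x + h)) ≠ (y < f x)}
      ≤ volume (⋃ z ∈ hfin.toFinset, Metric.closedBall z t) := measure_mono fun x hx => by
        obtain ⟨z, hz, hxz⟩ := exists_eq_dist_le_of_lt_ne_lt hf hx
        exact mem_biUnion (hfin.mem_toFinset.2 hz) (Metric.mem_closedBall.2 (hxz.trans hh))
    _ ≤ ∑ z ∈ hfin.toFinset, volume (Metric.closedBall z t) := measure_biUnion_finset_le _ _
    _ ≤ ∑ z ∈ hfin.toFinset, ENNReal.ofReal (2 * t) := Finset.sum_le_sum fun z _ => by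
        rw [AddCircle.volume_closedBall]
        exact ENNReal.ofReal_le_ofReal (min_le_right _ _)
    _ = _ := by rw [Finset.sum_const, nsmul_eq_mul, ncard_eq_toFinset_card _ hfin]

lemma min_one_natCast_mul_le {t : ℝ} (ht0 : 0 < t) (ht1 : t < 1) (n : ℕ) :
    min 1 (n * (2 * t)) ≤ √(log n) * √(2 / log t⁻¹) + 2 * √t := by
  have hL : 0 < log t⁻¹ := log_pos ((one_lt_inv₀ ht0).2 ht1)
  rcases le_or_gt (log t⁻¹) (2 * log n) with hmany | hfew
  · refine (min_le_left _ _).trans (le_add_of_le_of_nonneg ?_ (by positivity))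
    rw [← sqrt_mul' _ (by positivity), one_le_sqrt, ← mul_div_assoc, le_div_iff₀ hL]
    linarith
  · refine (min_le_right _ _).trans (le_add_of_nonneg_of_le (by positivity) ?_)
    rcases n.eq_zero_or_pos with rfl | hn
    · simp [sqrt_nonneg]
    have hn2 : (n : ℝ) ^ 2 < t⁻¹ := by
      rwa [← log_lt_log_iff (by positivity) (by positivity), log_pow, Nat.cast_ofNat]
    have hnt : (n * √t) ^ 2 < 1 := by
      rw [mul_pow, sq_sqrt ht0.le, ← lt_div_iff₀ ht0, one_div]; exact hn2
    have hnt' : n * √t ≤ 1 := ((pow_lt_one_iff_of_nonneg (by positivity) two_ne_zero).1 hnt).le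
    calc (n : ℝ) * (2 * t) = 2 * √t * (n * √t) := by
          linear_combination (-2 * (n : ℝ)) * mul_self_sqrt ht0.le
      _ ≤ 2 * √t * 1 := by gcongr
      _ = 2 * √t := mul_one _

lemma sqrt_le_inv_sqrt_log_inv {t : ℝ} (ht0 : 0 < t) (ht1 : t < 1) : √t ≤ (√(log t⁻¹))⁻¹ := by
  have hL : 0 < log t⁻¹ := log_pos ((one_lt_inv₀ ht0).2 ht1)
  rw [← one_div, le_div_iff₀ (sqrt_pos.2 hL), ← sqrt_mul ht0.le, sqrt_le_one, log_inv]
  linarith [neg_abs_le (log t * t), abs_log_mul_self_lt t ht0 ht1.le]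

lemma volume_setOf_lt_ne_lt_le_sqrtLogIndicatrix {f : AddCircle (1:ℝ) → ℝ} (hf : Continuous f)
    {y h t : ℝ} (ht0 : 0 < t) (ht1 : t < 1) (hh : |h| ≤ t) :
    volume {x : AddCircle (1:ℝ) | (y < f (x + h)) ≠ (y < f x)}
      ≤ sqrtLogIndicatrix f y * ENNReal.ofReal √(2 / log t⁻¹) + ENNReal.ofReal (2 * √t) := by
  have hL : 0 < log t⁻¹ := log_pos ((one_lt_inv₀ ht0).2 ht1)
  unfold sqrtLogIndicatrix
  split_ifs with hinf
  · rw [ENNReal.top_mul (by simpa using hL)]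
    exact le_top.trans le_self_add
  have hfin := Set.not_infinite.1 hinf
  calc volume {x : AddCircle (1:ℝ) | (y < f (x + h)) ≠ (y < f x)}
      ≤ ENNReal.ofReal (min 1 ({x | f x = y}.ncard * (2 * t))) := by
        rw [ENNReal.ofReal_min, ENNReal.ofReal_one, ENNReal.ofReal_mul (by positivity),
          ENNReal.ofReal_natCast]
        refine le_min ((measure_mono (subset_univ _)).trans_eq ?_)
          (AddCircle.volume_setOf_lt_ne_lt_le hf hh hfin)
        simp [AddCircle.measure_univ]
    _ ≤ ENNReal.ofReal (√(log {x | f x = y}.ncard) * √(2 / log t⁻¹) + 2 * √t) :=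
        ENNReal.ofReal_le_ofReal (min_one_natCast_mul_le ht0 ht1 _)
    _ = _ := by rw [ENNReal.ofReal_add (by positivity) (by positivity),
          ENNReal.ofReal_mul (sqrt_nonneg _)]

lemma integral_abs_sub_le {f : AddCircle (1:ℝ) → ℝ} (hf : Continuous f)
    (hf0 : ∀ x, 0 ≤ f x) (hf1 : ∀ x, f x ≤ 1)
    (hI : ∫⁻ y in Ioo (0:ℝ) 1, sqrtLogIndicatrix f y ≠ ⊤) {h t : ℝ} (ht0 : 0 < t) (ht1 : t < 1)
    (hh : |h| ≤ t) :
    ∫ x, |f (x + h) - f x|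
      ≤ (∫⁻ y in Ioo (0:ℝ) 1, sqrtLogIndicatrix f y).toReal * √(2 / log t⁻¹) + 2 * √t := by
  set I := ∫⁻ y in Ioo (0:ℝ) 1, sqrtLogIndicatrix f y
  have hrange : ∀ x, f x ∈ Icc (0:ℝ) 1 := fun x => ⟨hf0 x, hf1 x⟩
  calc ∫ x, |f (x + h) - f x|
      = (∫⁻ x, ENNReal.ofReal |f (x + h) - f x|).toReal :=
        integral_eq_lintegral_of_nonneg_ae (ae_of_all _ fun _ => abs_nonneg _)
          (by fun_prop : Continuous fun x => |f (x + h) - f x|).aestronglyMeasurable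
    _ = (∫⁻ y in Ioo (0:ℝ) 1, volume {x | (y < f (x + h)) ≠ (y < f x)}).toReal := by
        rw [lintegral_ofReal_abs_sub_eq_setLIntegral (by fun_prop) hf.measurable
          (fun x => hrange _) hrange]
    _ ≤ (I * ENNReal.ofReal √(2 / log t⁻¹) + ENNReal.ofReal (2 * √t)).toReal := by
        refine ENNReal.toReal_mono (by finiteness) ((lintegral_mono fun y =>
          volume_setOf_lt_ne_lt_le_sqrtLogIndicatrix hf ht0 ht1 hh).trans_eq ?_)
        rw [lintegral_add_right _ measurable_const, lintegral_mul_const' _ _ ENNReal.ofReal_ne_top,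
          setLIntegral_const, Real.volume_Ioo, sub_zero, ENNReal.ofReal_one, mul_one]
    _ = _ := by
        rw [ENNReal.toReal_add (by finiteness) ENNReal.ofReal_ne_top, ENNReal.toReal_mul,
          ENNReal.toReal_ofReal (sqrt_nonneg _), ENNReal.toReal_ofReal (by positivity)]

lemma modulus_one_le {f : AddCircle (1:ℝ) → ℝ} {t B : ℝ} (ht : 0 ≤ t)
    (hB : ∀ h : ℝ, |h| ≤ t → ∫ x, |f (x + h) - f x| ≤ B) : modulus f 1 t ≤ B := by
  have : Nonempty {h : ℝ // |h| ≤ t} := ⟨⟨0, by simpa using ht⟩⟩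
  exact ciSup_le fun h => by simpa using hB h.1 h.2

/-- If `f` is continuous on the circle with `0 ≤ f ≤ 1` and the Banach
indicatrix `n(y) = #{x : f x = y}` satisfies `∫₀¹ (log n(y))^{1/2} dy < ∞` (integrand `+∞`
when `n(y) = ∞`, and `0` when `n(y) ≤ 1`), then `ω(f,t)_1 = O((log(1/t))^{-1/2})`. -/
theorem stmt_3 (f : AddCircle (1:ℝ) → ℝ) (hf : Continuous f)
    (hf0 : ∀ x, 0 ≤ f x) (hf1 : ∀ x, f x ≤ 1)
    (hint : ∫⁻ y in Set.Ioo (0:ℝ) 1,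
      (if {x : AddCircle (1:ℝ) | f x = y}.Infinite then ⊤
       else ENNReal.ofReal (Real.sqrt (Real.log ({x : AddCircle (1:ℝ) | f x = y}.ncard)))) < ⊤) :
    ∃ C > 0, ∃ t₀ ∈ Set.Ioo (0:ℝ) 1, ∀ t ∈ Set.Ioc (0:ℝ) t₀,
      modulus f 1 t ≤ C * (Real.log (1/t)) ^ (-(1:ℝ)/2) := by
  set I := ∫⁻ y in Ioo (0:ℝ) 1, sqrtLogIndicatrix f y
  refine ⟨√2 * I.toReal + 2, by positivity, 1/2, by norm_num, fun t ⟨ht0, ht⟩ =>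
    modulus_one_le ht0.le fun h hh => ?_⟩
  have hL : 0 < log t⁻¹ := log_pos ((one_lt_inv₀ ht0).2 (by linarith))
  calc ∫ x, |f (x + h) - f x| ≤ I.toReal * √(2 / log t⁻¹) + 2 * √t :=
        integral_abs_sub_le hf hf0 hf1 hint.ne ht0 (by linarith) hh
    _ ≤ (√2 * I.toReal + 2) * (√(log t⁻¹))⁻¹ := by
        rw [sqrt_div' _ hL.le, div_eq_mul_inv]
        linear_combination 2 * sqrt_le_inv_sqrt_log_inv ht0 (by linarith)
    _ = _ := by
        rw [one_div, show -(1:ℝ) / 2 = -(1 / 2) by norm_num, rpow_neg hL.le, ← sqrt_eq_rpow]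
end
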